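/- The function f₂(x) = 1/(ψ(x+1) - ln(x)) - 2x tends to 1/3 as x → ∞. -/

import Mathlib

open Real Filter Topology Set

noncomputable def digamma (x : ℝ) : ℝ := deriv Real.Gamma x / Real.Gamma x

noncomputable def trigamma (x : ℝ) : ℝ := deriv digamma x

/-!
Write `d x = ψ(x + 1) - log x`. The recurrence `ψ(x + 1) = ψ(x) + 1 / x` gives
`d x - d (x + 1) = log (1 + 1 / x) - 1 / (x + 1)`, and convexity of `log ∘ Γ` traps `d x` between
`0` and `1 / x`, so `d x → 0`. Hence `d x` is the sum of its consecutive differences, and comparing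
these termwise (via the Taylor bounds for `log (1 + u)`) with the differences of two explicit
rational functions `L ≤ U` that also vanish at infinity gives `L x ≤ d x ≤ U x` for `x ≥ 1`. Both
`1 / U x - 2 x` and `1 / L x - 2 x` are quotients of quadratics with leading coefficients `2` and
`6`, so they tend to `1 / 3`.
-/

theorem le_of_tendsto_of_forall_sub_add_one_le {f g : ℝ → ℝ} {l x : ℝ}
    (hf : Tendsto f atTop (𝓝 l)) (hg : Tendsto g atTop (𝓝 l))
    (h : ∀ t ≥ x, f t - f (t + 1) ≤ g t - g (t + 1)) : f x ≤ g x := by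
  set s : ℕ → ℝ := fun n => g (x + n) - f (x + n)
  have hs : Antitone s := antitone_nat_of_succ_le fun n => by
    have := h (x + n) (by simp)
    simp only [s, Nat.cast_succ, ← add_assoc]
    linarith
  have hlim : Tendsto s atTop (𝓝 0) := by
    simpa [s, Function.comp_def] using
      (hg.sub hf).comp (tendsto_atTop_add_const_left _ x tendsto_natCast_atTop_atTop)
  simpa [s] using hs.le_of_tendsto hlim 0

theorem le_of_hasDerivAt_le {f g f' g' : ℝ → ℝ} {a b : ℝ} (hab : a ≤ b)
    (hf : ∀ x ∈ Icc a b, HasDerivAt f (f' x) x) (hg : ∀ x ∈ Icc a b, HasDerivAt g (g' x) x)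
    (ha : f a ≤ g a) (bound : ∀ x ∈ Ico a b, f' x ≤ g' x) : f b ≤ g b :=
  image_le_of_deriv_right_le_deriv_boundary
    (fun x hx => (hf x hx).continuousAt.continuousWithinAt)
    (fun x hx => (hf x (Ico_subset_Icc_self hx)).hasDerivWithinAt) ha
    (fun x hx => (hg x hx).continuousAt.continuousWithinAt)
    (fun x hx => (hg x (Ico_subset_Icc_self hx)).hasDerivWithinAt) bound ⟨hab, le_rfl⟩

theorem hasDerivAt_log_one_add {x : ℝ} (hx : 0 < 1 + x) :
    HasDerivAt (fun y => log (1 + y)) (1 / (1 + x)) x :=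
  ((hasDerivAt_id x).const_add 1).log hx.ne'

theorem log_one_add_le {u : ℝ} (hu : 0 ≤ u) : log (1 + u) ≤ u - u ^ 2 / 2 + u ^ 3 / 3 := by
  have hpoly (x : ℝ) : HasDerivAt (fun y : ℝ => y - y ^ 2 / 2 + y ^ 3 / 3) (1 - x + x ^ 2) x := by
    refine (((hasDerivAt_id' x).sub ((hasDerivAt_pow 2 x).div_const 2)).add
      ((hasDerivAt_pow 3 x).div_const 3)).congr_deriv ?_
    norm_num
  refine le_of_hasDerivAt_le hu (fun x hx => hasDerivAt_log_one_add (by linarith [hx.1]))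
    (fun x _ => hpoly x) (by simp) fun x hx => ?_
  have : 0 ≤ x := hx.1
  rw [div_le_iff₀ (by positivity)]
  nlinarith [pow_nonneg this 3]

theorem le_log_one_add {u : ℝ} (hu : 0 ≤ u) :
    u - u ^ 2 / 2 + u ^ 3 / 3 - u ^ 4 / 4 ≤ log (1 + u) := by
  have hpoly (x : ℝ) : HasDerivAt (fun y : ℝ => y - y ^ 2 / 2 + y ^ 3 / 3 - y ^ 4 / 4)
      (1 - x + x ^ 2 - x ^ 3) x := by
    refine ((((hasDerivAt_id' x).sub ((hasDerivAt_pow 2 x).div_const 2)).add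
      ((hasDerivAt_pow 3 x).div_const 3)).sub ((hasDerivAt_pow 4 x).div_const 4)).congr_deriv ?_
    norm_num
  refine le_of_hasDerivAt_le hu (fun x _ => hpoly x)
    (fun x hx => hasDerivAt_log_one_add (by linarith [hx.1])) (by simp) fun x hx => ?_
  have : 0 ≤ x := hx.1
  rw [le_div_iff₀ (by positivity)]
  nlinarith [pow_nonneg this 4]

theorem tendsto_quadratic_div_quadratic (a b c p q r : ℝ) (hp : p ≠ 0) :
    Tendsto (fun x => (a * x ^ 2 + b * x + c) / (p * x ^ 2 + q * x + r)) atTop (𝓝 (a / p)) := by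
  have hinv := tendsto_inv_atTop_zero (𝕜 := ℝ)
  have hlim (a b c : ℝ) : Tendsto (fun x : ℝ => a + b * x⁻¹ + c * (x⁻¹) ^ 2) atTop (𝓝 a) := by
    simpa using ((hinv.const_mul b).const_add a).add ((hinv.pow 2).const_mul c)
  refine ((hlim a b c).div (hlim p q r) hp).congr' ?_
  filter_upwards [eventually_gt_atTop 0] with x hx
  rw [Pi.div_apply, ← div_div_div_cancel_right₀ (pow_ne_zero 2 hx.ne') (a * x ^ 2 + b * x + c)]
  congr 1 <;> field_simp

namespace Real

theorem differentiableAt_Gamma_of_pos {x : ℝ} (hx : 0 < x) : DifferentiableAt ℝ Gamma x :=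
  differentiableAt_Gamma fun m => by linarith [(Nat.cast_nonneg m : (0 : ℝ) ≤ m)]

theorem log_Gamma_add_one {x : ℝ} (hx : 0 < x) :
    log (Gamma (x + 1)) = log (Gamma x) + log x := by
  rw [Gamma_add_one hx.ne', log_mul hx.ne' (Gamma_pos_of_pos hx).ne', add_comm]

end Real

theorem hasDerivAt_log_Gamma {x : ℝ} (hx : 0 < x) :
    HasDerivAt (log ∘ Gamma) (digamma x) x :=
  (differentiableAt_Gamma_of_pos hx).hasDerivAt.log (Gamma_pos_of_pos hx).ne'

theorem digamma_add_one {x : ℝ} (hx : 0 < x) : digamma (x + 1) = digamma x + x⁻¹ := by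
  have hshift : HasDerivAt (fun y => log (Gamma (y + 1))) (digamma (x + 1)) x :=
    (hasDerivAt_log_Gamma (by linarith)).comp_add_const x 1
  refine hshift.unique
    (((hasDerivAt_log_Gamma hx).add (hasDerivAt_log hx.ne')).congr_of_eventuallyEq ?_)
  filter_upwards [eventually_gt_nhds hx] with y hy using log_Gamma_add_one hy

theorem digamma_le_log {x : ℝ} (hx : 0 < x) : digamma x ≤ log x := by
  have := convexOn_log_Gamma.le_slope_of_hasDerivAt (mem_Ioi.mpr hx)
    (mem_Ioi.mpr (by linarith : 0 < x + 1)) (by linarith) (hasDerivAt_log_Gamma hx)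
  simpa [slope_def_field, log_Gamma_add_one hx] using this

theorem log_le_digamma_add_one {x : ℝ} (hx : 0 < x) : log x ≤ digamma (x + 1) := by
  have := convexOn_log_Gamma.slope_le_of_hasDerivAt (mem_Ioi.mpr hx)
    (mem_Ioi.mpr (by linarith : 0 < x + 1)) (by linarith) (hasDerivAt_log_Gamma (by linarith))
  simpa [slope_def_field, log_Gamma_add_one hx] using this

theorem log_add_one_sub_log {x : ℝ} (hx : 0 < x) : log (x + 1) - log x = log (1 + x⁻¹) := by
  rw [← log_div (by linarith) hx.ne']
  field_simp

noncomputable def digammaGap (x : ℝ) : ℝ := digamma (x + 1) - log x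

theorem digammaGap_nonneg {x : ℝ} (hx : 0 < x) : 0 ≤ digammaGap x :=
  sub_nonneg.mpr (log_le_digamma_add_one hx)

theorem digammaGap_le_inv {x : ℝ} (hx : 0 < x) : digammaGap x ≤ x⁻¹ :=
  calc digammaGap x ≤ log (x + 1) - log x :=
        sub_le_sub_right (digamma_le_log (by linarith)) _
    _ = log (1 + x⁻¹) := log_add_one_sub_log hx
    _ ≤ x⁻¹ := by linarith [log_le_sub_one_of_pos (by positivity : 0 < 1 + x⁻¹)]

theorem tendsto_digammaGap_atTop : Tendsto digammaGap atTop (𝓝 0) :=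
  squeeze_zero' (eventually_gt_atTop 0 |>.mono fun _ => digammaGap_nonneg)
    (eventually_gt_atTop 0 |>.mono fun _ => digammaGap_le_inv) tendsto_inv_atTop_zero

theorem digammaGap_sub_digammaGap_add_one {x : ℝ} (hx : 0 < x) :
    digammaGap x - digammaGap (x + 1) = log (1 + x⁻¹) - (x + 1)⁻¹ := by
  rw [digammaGap, digammaGap, digamma_add_one (by linarith : 0 < x + 1),
    ← log_add_one_sub_log hx]
  ring

/- These are `1 / (2 t) - 1 / (12 t (t + 1)) ± 4 / (3 t (t + 1) (t + 2))`: the start of the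
expansion of `digammaGap t` in inverse rising factorials, with an error margin of the next order. -/
noncomputable def digammaGapUpper (t : ℝ) : ℝ :=
  (6 * t ^ 2 + 17 * t + 26) / (12 * t * (t + 1) * (t + 2))

noncomputable def digammaGapLower (t : ℝ) : ℝ :=
  (6 * t ^ 2 + 17 * t - 6) / (12 * t * (t + 1) * (t + 2))

theorem digammaGapLower_pos {t : ℝ} (ht : 1 ≤ t) : 0 < digammaGapLower t :=
  div_pos (by nlinarith) (by positivity)

theorem digammaGapLower_le_digammaGapUpper {t : ℝ} (ht : 0 ≤ t) :
    digammaGapLower t ≤ digammaGapUpper t :=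
  div_le_div_of_nonneg_right (by linarith) (by positivity)

theorem digammaGapUpper_le_inv {t : ℝ} (ht : 1 ≤ t) : digammaGapUpper t ≤ t⁻¹ := by
  rw [digammaGapUpper, div_le_iff₀ (by positivity)]
  field_simp
  nlinarith

theorem tendsto_digammaGapUpper_atTop : Tendsto digammaGapUpper atTop (𝓝 0) :=
  squeeze_zero' (eventually_ge_atTop 1 |>.mono fun _ ht =>
      (digammaGapLower_pos ht).le.trans (digammaGapLower_le_digammaGapUpper (by linarith)))
    (eventually_ge_atTop 1 |>.mono fun _ => digammaGapUpper_le_inv) tendsto_inv_atTop_zero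

theorem tendsto_digammaGapLower_atTop : Tendsto digammaGapLower atTop (𝓝 0) :=
  squeeze_zero' (eventually_ge_atTop 1 |>.mono fun _ ht => (digammaGapLower_pos ht).le)
    (eventually_ge_atTop 1 |>.mono fun _ ht =>
      digammaGapLower_le_digammaGapUpper (by linarith) |>.trans (digammaGapUpper_le_inv ht))
    tendsto_inv_atTop_zero

theorem log_one_add_inv_sub_inv_le_digammaGapUpper_sub {t : ℝ} (ht : 1 ≤ t) :
    log (1 + t⁻¹) - (t + 1)⁻¹ ≤ digammaGapUpper t - digammaGapUpper (t + 1) := by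
  have hlog := log_one_add_le (inv_nonneg.mpr (by linarith : (0 : ℝ) ≤ t))
  suffices t⁻¹ - (t⁻¹) ^ 2 / 2 + (t⁻¹) ^ 3 / 3 - (t + 1)⁻¹ ≤
      digammaGapUpper t - digammaGapUpper (t + 1) by linarith
  rw [digammaGapUpper, digammaGapUpper, ← sub_nonneg]
  -- the gap is a fraction whose numerator has positive coefficients in powers of `t - 1`
  have key : (0 : ℝ) ≤ (16 + 104 * (t - 1) + 136 * (t - 1) ^ 2 + 48 * (t - 1) ^ 3) /
      (12 * t ^ 4 * (t + 1) * (t + 2) * (t + 3)) := by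
    have : 0 ≤ t - 1 := by linarith
    positivity
  convert key using 1
  field_simp
  ring

theorem digammaGapLower_sub_le_log_one_add_inv_sub_inv {t : ℝ} (ht : 1 ≤ t) :
    digammaGapLower t - digammaGapLower (t + 1) ≤ log (1 + t⁻¹) - (t + 1)⁻¹ := by
  have hlog := le_log_one_add (inv_nonneg.mpr (by linarith : (0 : ℝ) ≤ t))
  suffices digammaGapLower t - digammaGapLower (t + 1) ≤
      t⁻¹ - (t⁻¹) ^ 2 / 2 + (t⁻¹) ^ 3 / 3 - (t⁻¹) ^ 4 / 4 - (t + 1)⁻¹ by linarith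
  rw [digammaGapLower, digammaGapLower, ← sub_nonneg]
  have key : (0 : ℝ) ≤ (8 + 106 * (t - 1) + 125 * (t - 1) ^ 2 + 45 * (t - 1) ^ 3) /
      (12 * t ^ 4 * (t + 1) * (t + 2) * (t + 3)) := by
    have : 0 ≤ t - 1 := by linarith
    positivity
  convert key using 1
  field_simp
  ring

theorem digammaGap_mem_Icc {x : ℝ} (hx : 1 ≤ x) :
    digammaGap x ∈ Icc (digammaGapLower x) (digammaGapUpper x) := by
  constructor
  · refine le_of_tendsto_of_forall_sub_add_one_le tendsto_digammaGapLower_atTop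
      tendsto_digammaGap_atTop fun t ht => ?_
    rw [digammaGap_sub_digammaGap_add_one (by linarith)]
    exact digammaGapLower_sub_le_log_one_add_inv_sub_inv (hx.trans ht)
  · refine le_of_tendsto_of_forall_sub_add_one_le tendsto_digammaGap_atTop
      tendsto_digammaGapUpper_atTop fun t ht => ?_
    rw [digammaGap_sub_digammaGap_add_one (by linarith)]
    exact log_one_add_inv_sub_inv_le_digammaGapUpper_sub (hx.trans ht)

theorem one_div_digammaGapUpper_sub {x : ℝ} (hx : 0 < x) :
    1 / digammaGapUpper x - 2 * x = (2 * x ^ 2 - 28 * x) / (6 * x ^ 2 + 17 * x + 26) := by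
  rw [digammaGapUpper, one_div_div]
  field_simp
  ring

theorem one_div_digammaGapLower_sub {x : ℝ} (hx : 1 ≤ x) :
    1 / digammaGapLower x - 2 * x = (2 * x ^ 2 + 36 * x) / (6 * x ^ 2 + 17 * x - 6) := by
  have : 6 * x ^ 2 + 17 * x - 6 ≠ 0 := (by nlinarith : 0 < 6 * x ^ 2 + 17 * x - 6).ne'
  rw [digammaGapLower, one_div_div, eq_div_iff this, sub_mul, div_mul_cancel₀ _ this]
  ring

theorem one_div_digammaGap_sub_mem_Icc {x : ℝ} (hx : 1 ≤ x) :
    1 / digammaGap x - 2 * x ∈ Icc ((2 * x ^ 2 - 28 * x) / (6 * x ^ 2 + 17 * x + 26))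
      ((2 * x ^ 2 + 36 * x) / (6 * x ^ 2 + 17 * x - 6)) := by
  obtain ⟨hlower, hupper⟩ := digammaGap_mem_Icc hx
  have hpos := digammaGapLower_pos hx
  rw [← one_div_digammaGapUpper_sub (by linarith), ← one_div_digammaGapLower_sub hx]
  exact ⟨sub_le_sub_right (one_div_le_one_div_of_le (hpos.trans_le hlower) hupper) _,
    sub_le_sub_right (one_div_le_one_div_of_le hpos hlower) _⟩

theorem f2_tendsto :
    Tendsto (fun x : ℝ => 1 / (digamma (x + 1) - Real.log x) - 2 * x) atTop (𝓝 (1/3)) := by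
  have hlower : Tendsto (fun x : ℝ => (2 * x ^ 2 - 28 * x) / (6 * x ^ 2 + 17 * x + 26)) atTop
      (𝓝 (1 / 3)) := by
    convert tendsto_quadratic_div_quadratic 2 (-28) 0 6 17 26 (by norm_num) using 1
    · ext x; ring
    · norm_num
  have hupper : Tendsto (fun x : ℝ => (2 * x ^ 2 + 36 * x) / (6 * x ^ 2 + 17 * x - 6)) atTop
      (𝓝 (1 / 3)) := by
    convert tendsto_quadratic_div_quadratic 2 36 0 6 17 (-6) (by norm_num) using 1
    · ext x; ring
    · norm_num
  refine tendsto_of_tendsto_of_tendsto_of_le_of_le' hlower hupper ?_ ?_ <;>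
    filter_upwards [eventually_ge_atTop 1] with x hx
  exacts [(one_div_digammaGap_sub_mem_Icc hx).1, (one_div_digammaGap_sub_mem_Icc hx).2]
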